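/- arXiv:2503.02006 — 3 statements merged into one kernel-verified Lean document; each statement's English description precedes it below -/
import Mathlib

section
/- Under the stability condition a²τ² ≤ (1 − ε₀²/2)h² with 0 < ε₀ ≤ 1, one has the two-sided bound min{2/3, (1+ε₁)(τ²/4)λ_k} ≤ 1 + ((τ² − h²)/12)λ_k ≤ 1, where ε₁ = (2/3)·ε₀²/(1 − ε₀²/2) and 0 < λ_k ≤ 4/h². -/
open Real

/-- Under the stability condition `τ² ≤ (1 - ε₀²/2) h²` (with `a = 1`) and `0 < λ ≤ 4/h²`,
the two-sided bound `min {2/3, (1+ε₁)(τ²/4)λ} ≤ 1 + ((τ²-h²)/12) λ ≤ 1` holds,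
where `ε₁ = (2/3) ε₀² / (1 - ε₀²/2)`. -/
theorem stability_two_sided_bound (h τ ε₀ lam : ℝ) (hh : 0 < h) (hτ : 0 < τ)
    (hε : 0 < ε₀) (hε1 : ε₀ ≤ 1) (hstab : τ ^ 2 ≤ (1 - ε₀ ^ 2 / 2) * h ^ 2)
    (hl0 : 0 < lam) (hl : lam ≤ 4 / h ^ 2) :
    min (2 / 3) ((1 + (2 / 3) * ε₀ ^ 2 / (1 - ε₀ ^ 2 / 2)) * (τ ^ 2 / 4) * lam)
        ≤ 1 + ((τ ^ 2 - h ^ 2) / 12) * lam ∧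
      1 + ((τ ^ 2 - h ^ 2) / 12) * lam ≤ 1 := by
  have hh2 : (0 : ℝ) < h ^ 2 := by positivity
  have hτh : τ ^ 2 ≤ h ^ 2 := le_trans hstab (by nlinarith)
  have hlh : lam * h ^ 2 ≤ 4 := by
    nlinarith [mul_le_mul_of_nonneg_right hl hh2.le, div_mul_cancel₀ (4:ℝ) hh2.ne']
  constructor
  · refine le_trans (min_le_left _ _) ?_
    nlinarith [mul_le_mul_of_nonneg_left hτh hl0.le]
  · nlinarith
end

section
/- For any real a > 0 and any y ∈ W^{1,1}(0,T) (absolutely continuous with integrable derivative), |∫₀^T |y(t) sin(at)| dt − (2/π)∫₀^T |y(t)| dt| ≤ (‖y'‖_{L¹(0,T)} + (3/2)(1 + π/2)‖y‖_{L^∞(0,T)})·(2/a). -/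
open Real


lemma integral_abs_sin_half_period (c : ℝ) : ∫ t in c..(c + π), |Real.sin t| = 2 := by
  have hper : Function.Periodic (fun x => |Real.sin x|) π := fun x => by
    simp [Real.sin_add_pi]
  rw [hper.intervalIntegral_add_eq c 0, zero_add]
  rw [intervalIntegral.integral_congr (g := Real.sin) ?_, integral_sin]
  · norm_num
  · intro x hx
    rw [Set.uIcc_of_le Real.pi_pos.le] at hx
    exact abs_of_nonneg (Real.sin_nonneg_of_nonneg_of_le_pi hx.1 hx.2)

lemma integral_abs_sin_mul (a c : ℝ) (ha : 0 < a) :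
    ∫ t in c..(c + π / a), |Real.sin (a * t)| = 2 / a := by
  rw [intervalIntegral.integral_comp_mul_left (fun x => |Real.sin x|) ha.ne']
  rw [mul_add, mul_div_cancel₀ _ ha.ne', integral_abs_sin_half_period]
  rw [smul_eq_mul]
  field_simp

lemma abs_dev_sin_le (x : ℝ) : abs (|Real.sin x| - 2 / π) ≤ 2 / π := by
  have h1 : |Real.sin x| ≤ 1 := Real.abs_sin_le_one x
  have h2 : (0:ℝ) ≤ |Real.sin x| := abs_nonneg _
  have hpi : (3:ℝ) < π := Real.pi_gt_three
  have hpi4 : π ≤ 4 := Real.pi_le_four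
  have h3 : (2:ℝ) / π ≥ 1 / 2 := by
    rw [ge_iff_le, div_le_div_iff₀ (by norm_num) (by linarith)]
    linarith
  rw [abs_le]
  constructor <;> linarith

lemma key_interval (T a : ℝ) (ha : 0 < a) (y y' : ℝ → ℝ)
    (hy : ∀ t ∈ Set.Icc (0 : ℝ) T, HasDerivAt y (y' t) t)
    (hy' : IntervalIntegrable y' MeasureTheory.volume 0 T)
    (c : ℝ) (hc : 0 ≤ c) (hcp : c + π / a ≤ T) :
    |∫ t in c..(c + π / a), |y t| * (|Real.sin (a * t)| - 2 / π)|
      ≤ (∫ t in c..(c + π / a), |y' t|) * (2 / a) := by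
  have hπ := Real.pi_pos
  set p := π / a with hp
  have hpp : 0 < p := div_pos hπ ha
  set d := c + p with hd
  have hcd : c ≤ d := by simp only [hd]; linarith
  have hdT : d ≤ T := hcp
  have h0T : (0:ℝ) ≤ T := le_trans hc (le_trans hcd hdT)
  have hsub : Set.Icc c d ⊆ Set.Icc (0:ℝ) T := Set.Icc_subset_Icc hc hdT
  have hsub' : Set.uIcc c d ⊆ Set.uIcc (0:ℝ) T := by
    rw [Set.uIcc_of_le hcd, Set.uIcc_of_le h0T]
    exact hsub
  have hycont : ContinuousOn y (Set.Icc (0:ℝ) T) := fun t ht =>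
    (hy t ht).continuousAt.continuousWithinAt
  have hy'sub : IntervalIntegrable y' MeasureTheory.volume c d := hy'.mono_set hsub'
  set W := ∫ t in c..d, |y' t| with hW
  have hW0 : 0 ≤ W := intervalIntegral.integral_nonneg hcd (fun t _ => abs_nonneg _)
  have hvar : ∀ t ∈ Set.Icc c d, abs (|y t| - |y c|) ≤ W := by
    intro t ht
    have hct : c ≤ t := ht.1
    have hmono1 : Set.uIcc c t ⊆ Set.uIcc c d := by
      rw [Set.uIcc_of_le hct, Set.uIcc_of_le hcd]
      exact Set.Icc_subset_Icc le_rfl ht.2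
    have hmono2 : Set.uIcc t d ⊆ Set.uIcc c d := by
      rw [Set.uIcc_of_le ht.2, Set.uIcc_of_le hcd]
      exact Set.Icc_subset_Icc hct le_rfl
    have hftc : ∫ s in c..t, y' s = y t - y c := by
      apply intervalIntegral.integral_eq_sub_of_hasDerivAt
      · intro s hs
        rw [Set.uIcc_of_le hct] at hs
        exact hy s (hsub ⟨hs.1, le_trans hs.2 ht.2⟩)
      · exact hy'sub.mono_set hmono1
    have h1 : |y t - y c| ≤ ∫ s in c..t, |y' s| := by
      rw [← hftc]
      exact intervalIntegral.abs_integral_le_integral_abs hct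
    have h2 : (∫ s in c..t, |y' s|) ≤ W := by
      have hadd : (∫ s in c..t, |y' s|) + ∫ s in t..d, |y' s| = W :=
        intervalIntegral.integral_add_adjacent_intervals
          (hy'sub.abs.mono_set hmono1) (hy'sub.abs.mono_set hmono2)
      have hnn : 0 ≤ ∫ s in t..d, |y' s| :=
        intervalIntegral.integral_nonneg ht.2 (fun s _ => abs_nonneg _)
      linarith
    exact le_trans (le_trans (abs_abs_sub_abs_le_abs_sub _ _) h1) h2
  have hgc : ContinuousOn (fun t => |Real.sin (a * t)| - 2 / π) (Set.Icc c d) := by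
    fun_prop
  have hint1 : IntervalIntegrable (fun t => (|y t| - |y c|) * (|Real.sin (a * t)| - 2 / π))
      MeasureTheory.volume c d := by
    apply ContinuousOn.intervalIntegrable
    rw [Set.uIcc_of_le hcd]
    exact ((hycont.mono hsub).abs.sub continuousOn_const).mul hgc
  have hzero : (∫ t in c..d, (|Real.sin (a * t)| - 2 / π)) = 0 := by
    have hconst : IntervalIntegrable (fun _ : ℝ => 2 / π) MeasureTheory.volume c d :=
      intervalIntegrable_const
    have habs : IntervalIntegrable (fun t => |Real.sin (a * t)|) MeasureTheory.volume c d := by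
      apply ContinuousOn.intervalIntegrable
      fun_prop
    rw [intervalIntegral.integral_sub habs hconst]
    rw [hd, hp, integral_abs_sin_mul a c ha, intervalIntegral.integral_const, smul_eq_mul]
    have hdc : c + π / a - c = π / a := by ring
    rw [hdc]
    field_simp
    ring
  have hdecomp : (∫ t in c..d, |y t| * (|Real.sin (a * t)| - 2 / π))
      = ∫ t in c..d, (|y t| - |y c|) * (|Real.sin (a * t)| - 2 / π) := by
    have hintf : IntervalIntegrable (fun t => |y t| * (|Real.sin (a * t)| - 2 / π))
        MeasureTheory.volume c d := by
      apply ContinuousOn.intervalIntegrable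
      rw [Set.uIcc_of_le hcd]
      exact (hycont.mono hsub).abs.mul hgc
    rw [← sub_eq_zero, ← intervalIntegral.integral_sub hintf hint1]
    have heq : ∀ t, |y t| * (|Real.sin (a * t)| - 2 / π)
        - (|y t| - |y c|) * (|Real.sin (a * t)| - 2 / π)
        = |y c| * (|Real.sin (a * t)| - 2 / π) := fun t => by ring
    simp_rw [heq]
    rw [intervalIntegral.integral_const_mul, hzero, mul_zero]
  rw [hdecomp]
  have hbound : ∀ t ∈ Set.uIoc c d,
      ‖(|y t| - |y c|) * (|Real.sin (a * t)| - 2 / π)‖ ≤ W * (2 / π) := by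
    intro t ht
    rw [Set.uIoc_of_le hcd] at ht
    have ht' : t ∈ Set.Icc c d := ⟨ht.1.le, ht.2⟩
    rw [Real.norm_eq_abs, abs_mul]
    exact mul_le_mul (hvar t ht') (abs_dev_sin_le _) (abs_nonneg _) hW0
  calc |∫ t in c..d, (|y t| - |y c|) * (|Real.sin (a * t)| - 2 / π)|
      ≤ W * (2 / π) * |d - c| := intervalIntegral.norm_integral_le_of_norm_le_const hbound
    _ = W * (2 / a) := by
        have hdc : d - c = π / a := by rw [hd, hp]; ring
        rw [hdc, abs_of_pos (by positivity)]
        field_simp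

/-- For `a > 0` and `y ∈ W^{1,1}(0,T)`,
`|∫₀^T |y sin(at)| - (2/π) ∫₀^T |y|| ≤ (‖y'‖_{L¹} + (3/2)(1+π/2)‖y‖_{L^∞})·(2/a)`. -/
theorem mean_of_abs_sin_estimate (T a : ℝ) (hT : 0 < T) (ha : 0 < a) (y y' : ℝ → ℝ)
    (hy : ∀ t ∈ Set.Icc (0 : ℝ) T, HasDerivAt y (y' t) t)
    (hy' : IntervalIntegrable y' MeasureTheory.volume 0 T) :
    abs ((∫ t in (0 : ℝ)..T, |y t * Real.sin (a * t)|)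
        - (2 / π) * ∫ t in (0 : ℝ)..T, |y t|)
      ≤ ((∫ t in (0 : ℝ)..T, |y' t|)
          + (3 / 2) * (1 + π / 2) * ⨆ t : Set.Icc (0 : ℝ) T, |y t.1|) * (2 / a) := by
  have hπ := Real.pi_pos
  set p := π / a with hp
  have hpp : 0 < p := div_pos hπ ha
  set N := ⌊T / p⌋₊ with hN
  have hNp : (N : ℝ) * p ≤ T := by
    have h1 : (N : ℝ) ≤ T / p := Nat.floor_le (div_nonneg hT.le hpp.le)
    calc (N : ℝ) * p ≤ (T / p) * p := mul_le_mul_of_nonneg_right h1 hpp.le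
      _ = T := by field_simp
  have hTp : T ≤ (N : ℝ) * p + p := by
    have h1 : T / p < (N : ℝ) + 1 := Nat.lt_floor_add_one (T / p)
    have h2 : T / p * p = T := by field_simp
    nlinarith
  have hNp0 : (0:ℝ) ≤ (N : ℝ) * p := by positivity
  have hycont : ContinuousOn y (Set.Icc (0:ℝ) T) := fun t ht =>
    (hy t ht).continuousAt.continuousWithinAt
  -- sup bound
  have hbdd : BddAbove (Set.range fun t : Set.Icc (0:ℝ) T => |y t.1|) := by
    rw [show (fun t : Set.Icc (0:ℝ) T => |y t.1|) = (fun t => |y t|) ∘ Subtype.val from rfl,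
      Set.range_comp, Subtype.range_coe]
    exact isCompact_Icc.bddAbove_image hycont.abs
  set M := ⨆ t : Set.Icc (0:ℝ) T, |y t.1| with hM
  have hMle : ∀ t ∈ Set.Icc (0:ℝ) T, |y t| ≤ M := fun t ht =>
    le_ciSup hbdd (⟨t, ht⟩ : Set.Icc (0:ℝ) T)
  have hM0 : (0:ℝ) ≤ M := le_trans (abs_nonneg (y 0)) (hMle 0 (Set.left_mem_Icc.2 hT.le))
  set f := fun t => |y t| * (|Real.sin (a * t)| - 2 / π) with hf
  have hfc : ContinuousOn f (Set.Icc (0:ℝ) T) := by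
    apply hycont.abs.mul
    fun_prop
  have hfint : ∀ u v : ℝ, 0 ≤ u → u ≤ v → v ≤ T →
      IntervalIntegrable f MeasureTheory.volume u v := by
    intro u v hu huv hv
    apply ContinuousOn.intervalIntegrable
    rw [Set.uIcc_of_le huv]
    exact hfc.mono (Set.Icc_subset_Icc hu hv)
  -- rewrite LHS
  have hI1 : IntervalIntegrable (fun t => |y t * Real.sin (a * t)|)
      MeasureTheory.volume 0 T := by
    apply ContinuousOn.intervalIntegrable
    rw [Set.uIcc_of_le hT.le]
    exact (hycont.mul (by fun_prop)).abs
  have hI2 : IntervalIntegrable (fun t => 2 / π * |y t|) MeasureTheory.volume 0 T := by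
    apply ContinuousOn.intervalIntegrable
    rw [Set.uIcc_of_le hT.le]
    exact continuousOn_const.mul hycont.abs
  have hLHS : (∫ t in (0:ℝ)..T, |y t * Real.sin (a * t)|)
      - 2 / π * ∫ t in (0:ℝ)..T, |y t| = ∫ t in (0:ℝ)..T, f t := by
    have h1 : ∀ t, f t = |y t * Real.sin (a * t)| - 2 / π * |y t| := by
      intro t; rw [hf]; simp only [abs_mul]; ring
    simp_rw [h1]
    rw [intervalIntegral.integral_sub hI1 hI2, intervalIntegral.integral_const_mul]
  rw [hLHS]
  -- adjacent intervals
  set A : ℕ → ℝ := fun k => (k : ℝ) * p with hA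
  have hAstep : ∀ k : ℕ, A (k + 1) = A k + p := by
    intro k; simp only [hA]; push_cast; ring
  have hAmem : ∀ k : ℕ, k ≤ N → 0 ≤ A k ∧ A k ≤ T := by
    intro k hk
    refine ⟨by positivity, ?_⟩
    calc A k ≤ A N := by
          simp only [hA]
          exact mul_le_mul_of_nonneg_right (by exact_mod_cast hk) hpp.le
      _ ≤ T := hNp
  have hintAk : ∀ k : ℕ, k < N → IntervalIntegrable f MeasureTheory.volume (A k) (A (k+1)) := by
    intro k hk
    exact hfint _ _ (hAmem k hk.le).1 (by rw [hAstep]; linarith) (hAmem (k+1) hk).2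
  have hy'abs : IntervalIntegrable (fun t => |y' t|) MeasureTheory.volume 0 T := hy'.abs
  have hy'int : ∀ u v : ℝ, 0 ≤ u → u ≤ v → v ≤ T →
      IntervalIntegrable (fun t => |y' t|) MeasureTheory.volume u v := by
    intro u v hu huv hv
    apply hy'abs.mono_set
    rw [Set.uIcc_of_le huv, Set.uIcc_of_le hT.le]
    exact Set.Icc_subset_Icc hu hv
  have hsumf : ∑ k ∈ Finset.range N, (∫ t in (A k)..(A (k+1)), f t)
      = ∫ t in (A 0)..(A N), f t :=
    intervalIntegral.sum_integral_adjacent_intervals hintAk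
  have hsumy' : ∑ k ∈ Finset.range N, (∫ t in (A k)..(A (k+1)), |y' t|)
      = ∫ t in (A 0)..(A N), |y' t| :=
    intervalIntegral.sum_integral_adjacent_intervals (fun k hk =>
      hy'int _ _ (hAmem k hk.le).1 (by rw [hAstep]; linarith) (hAmem (k+1) hk).2)
  have hA0 : A 0 = 0 := by simp [hA]
  have hAN : A N = (N : ℝ) * p := rfl
  -- main estimate on [0, Np]
  have hmain : |∫ t in (0:ℝ)..((N:ℝ)*p), f t| ≤ (∫ t in (0:ℝ)..T, |y' t|) * (2 / a) := by
    have hstart : (∫ t in (0:ℝ)..((N:ℝ)*p), f t)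
        = ∑ k ∈ Finset.range N, (∫ t in (A k)..(A (k+1)), f t) := by
      rw [hsumf, hA0, hAN]
    rw [hstart]
    calc |∑ k ∈ Finset.range N, (∫ t in (A k)..(A (k+1)), f t)|
        ≤ ∑ k ∈ Finset.range N, |∫ t in (A k)..(A (k+1)), f t| :=
          Finset.abs_sum_le_sum_abs _ _
      _ ≤ ∑ k ∈ Finset.range N, (∫ t in (A k)..(A (k+1)), |y' t|) * (2 / a) := by
          apply Finset.sum_le_sum
          intro k hk
          rw [Finset.mem_range] at hk
          rw [hAstep k]
          exact key_interval T a ha y y' hy hy' (A k) (hAmem k hk.le).1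
            (by rw [← hp, ← hAstep k]; exact (hAmem (k+1) hk).2)
      _ = (∑ k ∈ Finset.range N, ∫ t in (A k)..(A (k+1)), |y' t|) * (2 / a) := by
          rw [Finset.sum_mul]
      _ = (∫ t in (A 0)..(A N), |y' t|) * (2 / a) := by rw [hsumy']
      _ ≤ (∫ t in (0:ℝ)..T, |y' t|) * (2 / a) := by
          have hadd : (∫ t in (0:ℝ)..((N:ℝ)*p), |y' t|) + ∫ t in ((N:ℝ)*p)..T, |y' t|
              = ∫ t in (0:ℝ)..T, |y' t| :=
            intervalIntegral.integral_add_adjacent_intervals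
              (hy'int _ _ le_rfl hNp0 hNp) (hy'int _ _ hNp0 hNp le_rfl)
          have hnn : 0 ≤ ∫ t in ((N:ℝ)*p)..T, |y' t| :=
            intervalIntegral.integral_nonneg hNp (fun t _ => abs_nonneg _)
          have hle : (∫ t in (A 0)..(A N), |y' t|) ≤ ∫ t in (0:ℝ)..T, |y' t| := by
            rw [hA0, hAN]; linarith
          exact mul_le_mul_of_nonneg_right hle (by positivity)
  -- boundary estimate
  have hbdry : |∫ t in ((N:ℝ)*p)..T, f t| ≤ M * (2 / a) := by
    have hbound : ∀ t ∈ Set.uIoc ((N:ℝ)*p) T, ‖f t‖ ≤ M * (2 / π) := by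
      intro t ht
      rw [Set.uIoc_of_le hNp] at ht
      have ht' : t ∈ Set.Icc (0:ℝ) T := ⟨le_trans hNp0 ht.1.le, ht.2⟩
      rw [Real.norm_eq_abs, hf, abs_mul, abs_abs]
      exact mul_le_mul (hMle t ht') (abs_dev_sin_le _) (abs_nonneg _) hM0
    calc |∫ t in ((N:ℝ)*p)..T, f t| ≤ M * (2 / π) * |T - (N:ℝ)*p| :=
          intervalIntegral.norm_integral_le_of_norm_le_const hbound
      _ ≤ M * (2 / π) * p := by
          apply mul_le_mul_of_nonneg_left _ (by positivity)
          rw [abs_of_nonneg (by linarith)]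
          linarith
      _ = M * (2 / a) := by rw [hp]; field_simp
  -- combine
  have hsplit : (∫ t in (0:ℝ)..T, f t)
      = (∫ t in (0:ℝ)..((N:ℝ)*p), f t) + ∫ t in ((N:ℝ)*p)..T, f t :=
    (intervalIntegral.integral_add_adjacent_intervals
      (hfint _ _ le_rfl hNp0 hNp) (hfint _ _ hNp0 hNp le_rfl)).symm
  have h2a : (0:ℝ) ≤ 2 / a := by positivity
  have hMa : (0:ℝ) ≤ M * (2 / a) := mul_nonneg hM0 h2a
  calc |∫ t in (0:ℝ)..T, f t|
      ≤ |∫ t in (0:ℝ)..((N:ℝ)*p), f t| + |∫ t in ((N:ℝ)*p)..T, f t| := by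
        rw [hsplit]; exact abs_add_le _ _
    _ ≤ (∫ t in (0:ℝ)..T, |y' t|) * (2 / a) + M * (2 / a) := add_le_add hmain hbdry
    _ ≤ ((∫ t in (0:ℝ)..T, |y' t|) + 3 / 2 * (1 + π / 2) * M) * (2 / a) := by
        nlinarith [hMa, hM0, h2a, hπ]
end

section
/- For every integer k ≥ 1 and h = π/N with 1 ≤ k ≤ N−1, the mesh norm Σ_{i=1}^N (h/2)(|sin(k(i−1)h)| + |sin(kih)|) equals 2 + O(kh); precisely its difference from ∫₀^π |sin(kx)| dx = 2 is bounded by C·kh for an absolute constant C. -/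
open Real

lemma abs_sin_periodic : Function.Periodic (fun x => |Real.sin x|) π := by
  intro x
  simp [Real.sin_add_pi]

lemma abs_sin_lip (a b : ℝ) : abs (|Real.sin a| - |Real.sin b|) ≤ |a - b| := by
  have h1 : |Real.sin a - Real.sin b| ≤ |a - b| := by
    rw [Real.sin_sub_sin]
    calc |2 * Real.sin ((a-b)/2) * Real.cos ((a+b)/2)|
        = 2 * |Real.sin ((a-b)/2)| * |Real.cos ((a+b)/2)| := by
          rw [abs_mul, abs_mul]; norm_num
      _ ≤ 2 * |(a-b)/2| * 1 := by
          have h1 : |Real.sin ((a-b)/2)| ≤ |(a-b)/2| := Real.abs_sin_le_abs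
          have h2 : |Real.cos ((a+b)/2)| ≤ 1 := Real.abs_cos_le_one _
          have h3 : (0:ℝ) ≤ |Real.sin ((a-b)/2)| := abs_nonneg _
          nlinarith [abs_nonneg ((a-b)/2)]
      _ = |a - b| := by rw [abs_div]; simp [abs_of_nonneg]; ring
  exact le_trans (abs_abs_sub_abs_le_abs_sub _ _) h1

lemma integral_abs_sin_k (k : ℕ) (hk : 1 ≤ k) :
    ∫ x in (0:ℝ)..π, |Real.sin ((k:ℝ) * x)| = 2 := by
  have hk0 : (k:ℝ) ≠ 0 := by positivity
  have hint : ∀ t₁ t₂ : ℝ, IntervalIntegrable (fun x => |Real.sin x|) MeasureTheory.volume t₁ t₂ :=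
    fun t₁ t₂ => Real.continuous_sin.abs.intervalIntegrable _ _
  have h3 : (∫ x in (0:ℝ)..π, |Real.sin x|) = 2 := by
    have e : (∫ x in (0:ℝ)..π, |Real.sin x|) = ∫ x in (0:ℝ)..π, Real.sin x := by
      apply intervalIntegral.integral_congr
      intro x hx
      rw [Set.uIcc_of_le Real.pi_pos.le] at hx
      exact abs_of_nonneg (Real.sin_nonneg_of_mem_Icc hx)
    rw [e, integral_sin]; norm_num
  have h2 : (∫ x in (0:ℝ)..((k:ℝ)*π), |Real.sin x|) = (k:ℝ) * 2 := by
    have e := abs_sin_periodic.intervalIntegral_add_zsmul_eq (k:ℤ) 0 hint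
    simp only [zero_add, zsmul_eq_mul, Int.cast_natCast] at e
    rw [e, h3]
  rw [intervalIntegral.integral_comp_mul_left (fun x => |Real.sin x|) hk0, mul_zero, h2,
    smul_eq_mul]
  field_simp

/-- The trapezoidal mesh `L¹` norm of `sin kx` on `(0,π)` equals `2 + O(kh)`. -/
theorem mesh_norm_sin_asymptotics :
    ∃ C : ℝ, 0 < C ∧ ∀ (N k : ℕ) (h : ℝ), 0 < N → h = π / N → 1 ≤ k → k ≤ N - 1 →
      |(∑ i ∈ Finset.range N,
          (h / 2) * (|Real.sin ((k : ℝ) * ((i : ℝ) * h))|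
            + |Real.sin ((k : ℝ) * (((i : ℝ) + 1) * h))|)) - 2|
        ≤ C * (k : ℝ) * h := by
  refine ⟨π, Real.pi_pos, ?_⟩
  intro N k h hN hh hk1 hkN
  set f : ℝ → ℝ := fun x => |Real.sin ((k:ℝ) * x)| with hf
  have hcont : Continuous f := (Real.continuous_sin.comp (continuous_const.mul continuous_id)).abs
  have hh0 : 0 < h := by
    rw [hh]; positivity
  have hNh : (N:ℝ) * h = π := by
    rw [hh]; field_simp
  -- integrals over subintervals
  have hint : ∀ a b : ℝ, IntervalIntegrable f MeasureTheory.volume a b :=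
    fun a b => hcont.intervalIntegrable a b
  have hsum : ∑ i ∈ Finset.range N, ∫ x in ((i:ℝ)*h)..(((i:ℝ)+1)*h), f x
      = ∫ x in (0:ℝ)..π, f x := by
    have := intervalIntegral.sum_integral_adjacent_intervals
      (a := fun i : ℕ => (i:ℝ) * h) (n := N) (f := f) (μ := MeasureTheory.volume)
      (fun i _ => hint _ _)
    simpa [hNh] using this
  have hI : ∫ x in (0:ℝ)..π, f x = 2 := integral_abs_sin_k k hk1
  -- per-interval bound
  have hpiece : ∀ i : ℕ, |(h/2) * (f ((i:ℝ)*h) + f (((i:ℝ)+1)*h))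
      - ∫ x in ((i:ℝ)*h)..(((i:ℝ)+1)*h), f x| ≤ (k:ℝ) * h * h := by
    intro i
    set a := (i:ℝ) * h
    set b := ((i:ℝ)+1) * h
    have hab : b = a + h := by simp [a, b]; ring
    have hconst : (h/2) * (f a + f b) = ∫ _x in a..b, ((f a + f b)/2) := by
      rw [intervalIntegral.integral_const, smul_eq_mul, hab]
      ring
    rw [hconst, ← intervalIntegral.integral_sub (intervalIntegrable_const) (hint a b)]
    have hbound : ∀ x ∈ Set.uIoc a b, ‖(f a + f b)/2 - f x‖ ≤ (k:ℝ) * h := by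
      intro x hx
      rw [Set.uIoc_of_le (by rw [hab]; linarith) ] at hx
      have hxa : |a - x| ≤ h := by
        rw [abs_le]; constructor <;> [linarith [hx.1, hx.2, hab ▸ hx.2]; linarith [hx.1]]
      have hxb : |b - x| ≤ h := by
        rw [abs_le]
        constructor
        · linarith [hx.2]
        · have : a < x := hx.1
          have : x ≤ b := hx.2
          nlinarith [hx.1, hab]
      have h1 : |f a - f x| ≤ (k:ℝ) * h := by
        calc |f a - f x| ≤ |(k:ℝ)*a - (k:ℝ)*x| := abs_sin_lip _ _
          _ = (k:ℝ) * |a - x| := by rw [← mul_sub, abs_mul, Nat.abs_cast]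
          _ ≤ (k:ℝ) * h := by
              exact mul_le_mul_of_nonneg_left hxa (Nat.cast_nonneg k)
      have h2 : |f b - f x| ≤ (k:ℝ) * h := by
        calc |f b - f x| ≤ |(k:ℝ)*b - (k:ℝ)*x| := abs_sin_lip _ _
          _ = (k:ℝ) * |b - x| := by rw [← mul_sub, abs_mul, Nat.abs_cast]
          _ ≤ (k:ℝ) * h := mul_le_mul_of_nonneg_left hxb (Nat.cast_nonneg k)
      have : (f a + f b)/2 - f x = ((f a - f x) + (f b - f x))/2 := by ring
      rw [Real.norm_eq_abs, this]
      calc |((f a - f x) + (f b - f x))/2| ≤ (|f a - f x| + |f b - f x|)/2 := by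
            rw [abs_div, abs_two]
            gcongr
            exact abs_add_le _ _
        _ ≤ ((k:ℝ)*h + (k:ℝ)*h)/2 := by linarith
        _ = (k:ℝ)*h := by ring
    have := intervalIntegral.norm_integral_le_of_norm_le_const hbound
    rw [Real.norm_eq_abs] at this
    calc |∫ x in a..b, ((f a + f b)/2 - f x)| ≤ (k:ℝ)*h * |b - a| := this
      _ = (k:ℝ)*h*h := by rw [hab]; simp [abs_of_nonneg hh0.le]
  -- assemble
  have key : |(∑ i ∈ Finset.range N, (h/2) * (f ((i:ℝ)*h) + f (((i:ℝ)+1)*h))) - 2|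
      ≤ N * ((k:ℝ) * h * h) := by
    have e : (∑ i ∈ Finset.range N, (h/2) * (f ((i:ℝ)*h) + f (((i:ℝ)+1)*h))) - 2
        = ∑ i ∈ Finset.range N, ((h/2) * (f ((i:ℝ)*h) + f (((i:ℝ)+1)*h))
            - ∫ x in ((i:ℝ)*h)..(((i:ℝ)+1)*h), f x) := by
      rw [Finset.sum_sub_distrib, hsum, hI]
    rw [e]
    refine le_trans (Finset.abs_sum_le_sum_abs (fun i : ℕ => (h/2) * (f ((i:ℝ)*h) + f (((i:ℝ)+1)*h))
      - ∫ x in ((i:ℝ)*h)..(((i:ℝ)+1)*h), f x) (Finset.range N)) ?_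
    calc (∑ i ∈ Finset.range N, |(h/2) * (f ((i:ℝ)*h) + f (((i:ℝ)+1)*h))
          - ∫ x in ((i:ℝ)*h)..(((i:ℝ)+1)*h), f x|)
        ≤ ∑ _i ∈ Finset.range N, (k:ℝ)*h*h := Finset.sum_le_sum (fun i _ => hpiece i)
      _ = N * ((k:ℝ)*h*h) := by rw [Finset.sum_const, Finset.card_range]; simp
  have : (N:ℝ) * ((k:ℝ)*h*h) = π * (k:ℝ) * h := by
    rw [show (N:ℝ) * ((k:ℝ)*h*h) = ((N:ℝ)*h) * ((k:ℝ)*h) by ring, hNh]; ring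
  rw [this] at key
  simpa [hf, mul_assoc] using key
end
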